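/- Let H be a finite-dimensional complex inner product space and let P_E and P_O be orthogonal projections on H with P_E + P_O = 1. Let ψ and φ be unit vectors in H with ⟪ψ, φ⟫ = 0. Suppose there exists a linear operator S on H with 0 ≤ S ≤ 1 (i.e., S and 1 − S are positive semidefinite self-adjoint operators) satisfying the block-diagonality condition S = P_E S P_E + P_O S P_O, and such that ⟪ψ, S ψ⟫ − ⟪φ, S φ⟫ = 1. Then ⟪P_E ψ, P_E φ⟫ = 0 and ⟪P_O ψ, P_O φ⟫ = 0. -/

import Mathlib

open Matrix
open scoped ComplexOrder Kronecker

/-- The trace norm `‖Y‖₁ = Tr √(Yᴴ Y)` of a complex matrix. -/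
noncomputable def traceNorm {m : Type*} [Fintype m] [DecidableEq m]
    (Y : Matrix m m ℂ) : ℝ :=
  (((Matrix.posSemidef_conjTranspose_mul_self Y).1.eigenvectorUnitary : Matrix m m ℂ) *
    Matrix.diagonal (fun i => ((Real.sqrt ((Matrix.posSemidef_conjTranspose_mul_self Y).1.eigenvalues i) : ℝ) : ℂ)) *
    (star (Matrix.posSemidef_conjTranspose_mul_self Y).1.eigenvectorUnitary : Matrix m m ℂ)).trace.re

/-- The inner product `⟪x, y⟫ = ∑ i, conj (x i) * y i` on `m → ℂ`. -/
noncomputable def cinner {m : Type*} [Fintype m] (x y : m → ℂ) : ℂ := star x ⬝ᵥ y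

/-- An orthogonal projection: a self-adjoint idempotent matrix. -/
def IsOrthoProj {m : Type*} [Fintype m] (P : Matrix m m ℂ) : Prop :=
  P.IsHermitian ∧ P * P = P

/-- An effect: an operator `S` with `0 ≤ S ≤ 1`. -/
def IsEffect {m : Type*} [Fintype m] [DecidableEq m] (S : Matrix m m ℂ) : Prop :=
  S.PosSemidef ∧ (1 - S).PosSemidef

/-- The rank-one operator `|ψ⟩⟨ψ|`. -/
noncomputable def outer {m : Type*} (ψ : m → ℂ) : Matrix m m ℂ :=
  Matrix.vecMulVec ψ (star ψ)

/-!
Since `0 ≤ ⟪φ, S φ⟫` and `⟪ψ, S ψ⟫ ≤ ⟪ψ, ψ⟫ = 1`, perfect discrimination forces `S ψ = ψ` and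
`S φ = 0`. Block-diagonality makes `S` commute with `P_E` and `P_O`, so `P ψ` and `P φ` lie in the
eigenspaces of the self-adjoint `S` for the eigenvalues `1` and `0`, which are orthogonal.
-/

theorem commute_of_eq_mul_mul_add_mul_mul {R : Type*} [Ring R] {P Q S : R}
    (hP : IsIdempotentElem P) (hPQ : P + Q = 1) (hS : S = P * S * P + Q * S * Q) :
    Commute S P := by
  have hQ : Q = 1 - P := eq_sub_of_add_eq' hPQ
  have hPQ0 : P * Q = 0 := by rw [hQ, mul_sub, mul_one, hP.eq, sub_self]
  have hQP0 : Q * P = 0 := by rw [hQ, sub_mul, one_mul, hP.eq, sub_self]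
  have hSP : S * P = P * S * P := by
    conv_lhs => rw [hS]
    simp only [add_mul, mul_assoc, hP.eq, hQP0, mul_zero, add_zero]
  have hPS : P * S = P * S * P := by
    conv_lhs => rw [hS]
    simp only [mul_add, ← mul_assoc, hP.eq, hPQ0, zero_mul, add_zero]
  exact hSP.trans hPS.symm

section Matrix

variable {m : Type*} [Fintype m]

theorem cinner_eq_zero_of_mulVec_eq_self_of_mulVec_eq_zero {S : Matrix m m ℂ}
    (hS : S.IsHermitian) {x y : m → ℂ} (hx : S *ᵥ x = x) (hy : S *ᵥ y = 0) :
    cinner x y = 0 :=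
  calc cinner x y = star (S *ᵥ x) ⬝ᵥ y := by rw [hx]; rfl
    _ = star x ⬝ᵥ (Sᴴ *ᵥ y) := by rw [star_mulVec, ← dotProduct_mulVec]
    _ = 0 := by rw [hS.eq, hy, dotProduct_zero]

theorem Commute.cinner_mulVec_eq_zero {S P : Matrix m m ℂ} (hS : S.IsHermitian)
    (hSP : Commute S P) {x y : m → ℂ} (hx : S *ᵥ x = x) (hy : S *ᵥ y = 0) :
    cinner (P *ᵥ x) (P *ᵥ y) = 0 := by
  refine cinner_eq_zero_of_mulVec_eq_self_of_mulVec_eq_zero hS ?_ ?_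
  · rw [mulVec_mulVec, hSP.eq, ← mulVec_mulVec, hx]
  · rw [mulVec_mulVec, hSP.eq, ← mulVec_mulVec, hy, mulVec_zero]

variable [DecidableEq m]

theorem cinner_one_sub_mulVec (S : Matrix m m ℂ) (x : m → ℂ) :
    cinner x ((1 - S) *ᵥ x) = cinner x x - cinner x (S *ᵥ x) := by
  rw [sub_mulVec, one_mulVec]
  exact dotProduct_sub _ _ _

theorem IsEffect.cinner_mulVec_nonneg {S : Matrix m m ℂ} (hS : IsEffect S) (x : m → ℂ) :
    0 ≤ cinner x (S *ᵥ x) :=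
  hS.1.dotProduct_mulVec_nonneg x

theorem IsEffect.cinner_mulVec_le {S : Matrix m m ℂ} (hS : IsEffect S) (x : m → ℂ) :
    cinner x (S *ᵥ x) ≤ cinner x x := by
  have h := hS.2.dotProduct_mulVec_nonneg x
  rwa [← cinner, cinner_one_sub_mulVec, sub_nonneg] at h

theorem IsEffect.mulVec_eq_zero_of_cinner_eq_zero {S : Matrix m m ℂ} (hS : IsEffect S)
    {x : m → ℂ} (hx : cinner x (S *ᵥ x) = 0) : S *ᵥ x = 0 :=
  (hS.1.dotProduct_mulVec_zero_iff x).mp hx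

theorem IsEffect.mulVec_eq_self_of_cinner_eq {S : Matrix m m ℂ} (hS : IsEffect S)
    {x : m → ℂ} (hx : cinner x (S *ᵥ x) = cinner x x) : S *ᵥ x = x := by
  have h : cinner x ((1 - S) *ᵥ x) = 0 := by rw [cinner_one_sub_mulVec, hx, sub_self]
  have h0 := (hS.2.dotProduct_mulVec_zero_iff x).mp h
  rw [sub_mulVec, one_mulVec, sub_eq_zero] at h0
  exact h0.symm

theorem IsEffect.mulVec_eq_self_and_mulVec_eq_zero {S : Matrix m m ℂ} (hS : IsEffect S)
    {ψ φ : m → ℂ} (hψ : cinner ψ ψ = 1)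
    (hperf : cinner ψ (S *ᵥ ψ) - cinner φ (S *ᵥ φ) = 1) :
    S *ᵥ ψ = ψ ∧ S *ᵥ φ = 0 := by
  have hψ_le := hS.cinner_mulVec_le ψ
  have hφ_nonneg := hS.cinner_mulVec_nonneg φ
  rw [hψ] at hψ_le
  have hφ_eq : cinner φ (S *ᵥ φ) = cinner ψ (S *ᵥ ψ) - 1 := by linear_combination -hperf
  have hφ_zero : cinner φ (S *ᵥ φ) = 0 :=
    le_antisymm (hφ_eq ▸ sub_nonpos.mpr hψ_le) hφ_nonneg
  refine ⟨hS.mulVec_eq_self_of_cinner_eq ?_, hS.mulVec_eq_zero_of_cinner_eq_zero hφ_zero⟩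
  rw [hψ]
  linear_combination hperf + hφ_zero

end Matrix

theorem sep_perfect_discrimination_implies_parts_orthogonal_general
    {n : ℕ} (P_E P_O : Matrix (Fin n) (Fin n) ℂ)
    (hPE : IsOrthoProj P_E) (hsum : P_E + P_O = 1)
    (ψ φ : Fin n → ℂ) (hψ : cinner ψ ψ = 1)
    (S : Matrix (Fin n) (Fin n) ℂ) (hS : IsEffect S)
    (hblock : S = P_E * S * P_E + P_O * S * P_O)
    (hperf : cinner ψ (S.mulVec ψ) - cinner φ (S.mulVec φ) = 1) :
    cinner (P_E.mulVec ψ) (P_E.mulVec φ) = 0 ∧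
    cinner (P_O.mulVec ψ) (P_O.mulVec φ) = 0 := by
  obtain ⟨hSψ, hSφ⟩ := hS.mulVec_eq_self_and_mulVec_eq_zero hψ hperf
  have hSE : Commute S P_E := commute_of_eq_mul_mul_add_mul_mul hPE.2 hsum hblock
  have hSO : Commute S P_O := by
    rw [eq_sub_of_add_eq' hsum]
    exact (Commute.one_right S).sub_right hSE
  exact ⟨hSE.cinner_mulVec_eq_zero hS.1.1 hSψ hSφ, hSO.cinner_mulVec_eq_zero hS.1.1 hSψ hSφ⟩

/-- **Theorem 1, (SEP ⇒ separate orthogonality).**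
If two orthogonal unit vectors `ψ, φ` are perfectly discriminated by a block-diagonal
(separable) effect `S` with `0 ≤ S ≤ 1`, then their `E` and `O` parts are separately
orthogonal. -/
theorem sep_perfect_discrimination_implies_parts_orthogonal
    {n : ℕ} (P_E P_O : Matrix (Fin n) (Fin n) ℂ)
    (hPE : IsOrthoProj P_E) (hPO : IsOrthoProj P_O) (hsum : P_E + P_O = 1)
    (ψ φ : Fin n → ℂ) (hψ : cinner ψ ψ = 1) (hφ : cinner φ φ = 1)
    (horth : cinner ψ φ = 0)
    (S : Matrix (Fin n) (Fin n) ℂ) (hS : IsEffect S)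
    (hblock : S = P_E * S * P_E + P_O * S * P_O)
    (hperf : cinner ψ (S.mulVec ψ) - cinner φ (S.mulVec φ) = 1) :
    cinner (P_E.mulVec ψ) (P_E.mulVec φ) = 0 ∧
    cinner (P_O.mulVec ψ) (P_O.mulVec φ) = 0 :=
  sep_perfect_discrimination_implies_parts_orthogonal_general P_E P_O hPE hsum ψ φ hψ S hS hblock
    hperf
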